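/- Let T be an ω₁-tree, A ⊆ T a set which is discrete in the tree topology, and U ⊆ T a stationary open set. Then the set S = {α < ω₁ : U ∩ L_α(T) ≠ ∅ and U ∩ L_α(T) ⊆ A} is discrete in the ordinal topology on ω₁ (hence non-stationary), and consequently U \ A is stationary. -/

import Mathlib

/-- A tree: a type `T` with a strict partial order `lt` such that for each `x`,
the set of predecessors of `x` is well-ordered by `lt`. -/
structure TreeOrder (T : Type) where
  lt : T → T → Prop
  trans : ∀ {x y z : T}, lt x y → lt y z → lt x z
  irrefl : ∀ x : T, ¬ lt x x
  wellOrdered : ∀ x : T, IsWellOrder {y : T // lt y x} fun a b => lt a.1 b.1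

namespace TreeOrder

variable {T : Type} (S : TreeOrder T)

/-- `x↓`, the set of predecessors of `x`. -/
def below (x : T) : Set T := {y | S.lt y x}

/-- `x↑`, the set of elements above `x`. -/
def above (x : T) : Set T := {y | S.lt x y}

/-- The height of a node: the order type of `x↓`. -/
noncomputable def height (x : T) : Ordinal :=
  @Ordinal.type {y : T // S.lt y x} (fun a b => S.lt a.1 b.1) (S.wellOrdered x)

/-- The `α`-th level `L_α(T)`. -/
def level (α : Ordinal) : Set T := {x | S.height x = α}

/-- A set `U` is open in the tree topology iff for every `y ∈ U` of limit height
there is `x ◁ y` with `x↑ ∩ y↓ ⊆ U`. -/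
def TreeOpen (U : Set T) : Prop :=
  ∀ y ∈ U, Order.IsSuccLimit (S.height y) →
    ∃ x, S.lt x y ∧ ∀ z, S.lt x z → S.lt z y → z ∈ U

/-- Continuity with respect to the tree topology on `T`:
preimages of open sets are open in the tree topology. -/
def TContinuous {B : Type} [TopologicalSpace B] (ψ : T → B) : Prop :=
  ∀ V : Set B, IsOpen V → S.TreeOpen (ψ ⁻¹' V)

/-- `A ⊆ T` is discrete in the tree topology: every point of `A` is isolated in `A`. -/
def TDiscrete (A : Set T) : Prop :=
  ∀ a ∈ A, ∃ U : Set T, S.TreeOpen U ∧ a ∈ U ∧ U ∩ A = {a}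

/-- `T` is an `ω₁`-tree: it has cardinality `ℵ₁`, all levels are countable, and
the level `ω₁` is empty. -/
def IsOmega1Tree : Prop :=
  Cardinal.mk T = Cardinal.aleph 1 ∧
  (∀ α : Ordinal, (S.level α).Countable) ∧
  S.level (Cardinal.aleph 1).ord = ∅

/-- An Aronszajn tree is an `ω₁`-tree with no uncountable chains. -/
def IsAronszajn : Prop :=
  S.IsOmega1Tree ∧ ∀ C : Set T, IsChain S.lt C → C.Countable

/-- A special Aronszajn tree: an Aronszajn tree which is a countable union of antichains. -/
def IsSpecialAronszajn : Prop :=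
  S.IsAronszajn ∧
  ∃ A : ℕ → Set T, (∀ n, IsAntichain S.lt (A n)) ∧ (⋃ n, A n) = Set.univ

end TreeOrder

/-- `C` is closed in `κ`: it contains each of its limit points below `κ`. -/
def IsClosedIn (C : Set Ordinal.{0}) (κ : Ordinal.{0}) : Prop :=
  ∀ α < κ, α ≠ 0 → (∀ β < α, ∃ γ ∈ C, β < γ ∧ γ < α) → α ∈ C

/-- `C` is club in `κ`: closed and unbounded in `κ`. -/
def IsClubIn (C : Set Ordinal.{0}) (κ : Ordinal.{0}) : Prop :=
  IsClosedIn C κ ∧ ∀ α < κ, ∃ β ∈ C, α < β ∧ β < κ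

/-- `A` is stationary in `κ`: it meets every club subset of `κ`. -/
def IsStationaryIn (A : Set Ordinal.{0}) (κ : Ordinal.{0}) : Prop :=
  ∀ C : Set Ordinal, IsClubIn C κ → (A ∩ C).Nonempty

/-- A subset of a tree is stationary iff its set of heights is stationary in `ω₁`. -/
def TreeOrder.TStationary {T : Type} (S : TreeOrder T) (A : Set T) : Prop :=
  IsStationaryIn (S.height '' A) (Cardinal.aleph 1).ord

/-- The pruning `U^p` of `U`: all `x ∈ U` such that `x↑ ∩ U` is stationary. -/
def TreeOrder.prune {T : Type} (S : TreeOrder T) (U : Set T) : Set T :=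
  {x | x ∈ U ∧ S.TStationary (S.above x ∩ U)}

/-- The diamond principle `◊`: there is a sequence `⟨A_α : α < ω₁⟩` with `A_α ⊆ α`
such that for every `A ⊆ ω₁`, the set `{α : A ∩ α = A_α}` is stationary in `ω₁`. -/
def DiamondPrinciple : Prop :=
  ∃ A : Ordinal.{0} → Set Ordinal.{0},
    (∀ α, A α ⊆ Set.Iio α) ∧
    ∀ X : Set Ordinal.{0}, X ⊆ Set.Iio (Cardinal.aleph 1).ord →
      IsStationaryIn {α | X ∩ Set.Iio α = A α} (Cardinal.aleph 1).ord

/-!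
Let `S₀` be the set of levels `α` on which `U` is nonempty and contained in `A`. If `α ∈ S₀` is a
limit, pick `x ∈ U ∩ L_α`; then `x ∈ A`, and a tree-open neighbourhood `W` of `x` isolating it in
`A`, together with the openness of `U`, contains a whole tail of the branch below `x`. The nodes of
that tail lie in `U \ A`, so an interval below `α` misses `S₀`. Hence `S₀` is discrete, and the
club of nonzero ordinals that are limits of `S₀` or lie above all of `S₀` is disjoint from it.
Every level meeting `U` lies in `S₀` or meets `U \ A`, so intersecting clubs transfers the
stationarity of `U` to `U \ A`.
-/

open Cardinal Order Set

theorem exists_closure_point (f : Ordinal.{0} → Ordinal.{0})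
    (hf : ∀ δ < ord ℵ₁, f δ < ord ℵ₁) {α : Ordinal.{0}} (hα : α < ord ℵ₁) :
    ∃ β, α < β ∧ β < ord ℵ₁ ∧ ∀ δ < β, f δ < β := by
  have hω : ord ℵ₁ = Ordinal.omega 1 := ord_aleph 1
  have hlim : IsSuccLimit (ord ℵ₁) := isSuccLimit_ord (aleph0_le_aleph 1)
  have hcount : ∀ γ < ord ℵ₁, Countable (Iic γ) := by
    intro γ hγ
    rw [← Iio_succ, ← mk_le_aleph0_iff, mk_Iio_ordinal, lift_le_aleph0, ← lt_aleph_one_iff,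
      ← lt_ord]
    exact hlim.succ_lt hγ
  let g : Ordinal.{0} → Ordinal.{0} := fun γ => ⨆ δ : Iic γ, succ (max δ.1 (f δ))
  have hg_lt : ∀ γ < ord ℵ₁, g γ < ord ℵ₁ := by
    intro γ hγ
    have := hcount γ hγ
    rw [hω] at hlim hf hγ ⊢
    exact Ordinal.iSup_lt_omega_one fun δ =>
      hlim.succ_lt (max_lt (δ.2.trans_lt hγ) (hf _ (δ.2.trans_lt hγ)))
  have hg_gt : ∀ γ δ, δ ≤ γ → max δ (f δ) < g γ := fun γ δ h =>
    (lt_succ _).trans_le (Ordinal.le_iSup (fun δ : Iic γ => succ (max δ.1 (f δ))) ⟨δ, h⟩)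
  have hiter : ∀ n, g^[n] α < ord ℵ₁ := fun n => by
    induction n with
    | zero => exact hα
    | succ n ih => rw [Function.iterate_succ_apply']; exact hg_lt _ ih
  have hle : ∀ n, g^[n + 1] α ≤ ⨆ n, g^[n + 1] α := Ordinal.le_iSup _
  have hsup : ⨆ n, g^[n + 1] α < ord ℵ₁ := by
    rw [hω]
    exact Ordinal.iSup_lt_omega_one fun n => hω ▸ hiter (n + 1)
  refine ⟨⨆ n, g^[n + 1] α, ?_, hsup, ?_⟩
  · exact ((le_max_left _ _).trans_lt (hg_gt α α le_rfl)).trans_le (hle 0)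
  · intro δ hδ
    obtain ⟨n, hn⟩ := Ordinal.lt_iSup_iff.1 hδ
    refine ((le_max_right _ _).trans_lt (hg_gt _ δ hn.le)).trans_le ?_
    rw [← Function.iterate_succ_apply' g]
    exact hle (n + 1)

theorem exists_closure_point_rel (P : Ordinal.{0} → Ordinal.{0} → Prop)
    (hP : ∀ δ < ord ℵ₁, ∃ ε < ord ℵ₁, P δ ε) {α : Ordinal.{0}} (hα : α < ord ℵ₁) :
    ∃ β, α < β ∧ β < ord ℵ₁ ∧ ∀ δ < β, ∃ ε < β, P δ ε := by
  have : ∀ δ, ∃ ε, δ < ord ℵ₁ → ε < ord ℵ₁ ∧ P δ ε := fun δ =>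
    if h : δ < ord ℵ₁ then (hP δ h).imp fun _ hε _ => hε else ⟨0, fun h' => absurd h' h⟩
  choose f hf using this
  obtain ⟨β, hαβ, hβ, hclosed⟩ := exists_closure_point f (fun δ hδ => (hf δ hδ).1) hα
  exact ⟨β, hαβ, hβ, fun δ hδ => ⟨f δ, hclosed δ hδ, (hf δ (hδ.trans hβ)).2⟩⟩

theorem IsClubIn.inter {C D : Set Ordinal.{0}} (hC : IsClubIn C (ord ℵ₁))
    (hD : IsClubIn D (ord ℵ₁)) : IsClubIn (C ∩ D) (ord ℵ₁) := by
  refine ⟨fun α hα hα0 hcof => ⟨hC.1 α hα hα0 fun β hβ => ?_, hD.1 α hα hα0 fun β hβ => ?_⟩,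
    fun α hα => ?_⟩
  · exact (hcof β hβ).imp fun _ h => ⟨h.1.1, h.2⟩
  · exact (hcof β hβ).imp fun _ h => ⟨h.1.2, h.2⟩
  obtain ⟨β, hαβ, hβ, hclosed⟩ := exists_closure_point_rel
    (fun δ ε => (∃ c ∈ C, δ < c ∧ c ≤ ε) ∧ ∃ d ∈ D, δ < d ∧ d ≤ ε) (fun δ hδ => by
      obtain ⟨c, hc, hδc, hcκ⟩ := hC.2 δ hδ
      obtain ⟨d, hd, hδd, hdκ⟩ := hD.2 δ hδ
      exact ⟨max c d, max_lt hcκ hdκ, ⟨c, hc, hδc, le_max_left c d⟩,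
        ⟨d, hd, hδd, le_max_right c d⟩⟩)
    hα
  have hβ0 : β ≠ 0 := (zero_le.trans_lt hαβ).ne'
  refine ⟨β, ⟨hC.1 β hβ hβ0 fun δ hδ => ?_, hD.1 β hβ hβ0 fun δ hδ => ?_⟩, hαβ, hβ⟩
  · obtain ⟨ε, hεβ, ⟨c, hc, hδc, hcε⟩, -⟩ := hclosed δ hδ
    exact ⟨c, hc, hδc, hcε.trans_lt hεβ⟩
  · obtain ⟨ε, hεβ, -, ⟨d, hd, hδd, hdε⟩⟩ := hclosed δ hδ
    exact ⟨d, hd, hδd, hdε.trans_lt hεβ⟩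

theorem IsStationaryIn.of_subset_union {X Y Z : Set Ordinal.{0}} (hX : IsStationaryIn X (ord ℵ₁))
    (hZ : ¬ IsStationaryIn Z (ord ℵ₁)) (h : X ⊆ Y ∪ Z) : IsStationaryIn Y (ord ℵ₁) := by
  obtain ⟨C, hC, hZC⟩ : ∃ C, IsClubIn C (ord ℵ₁) ∧ Z ∩ C = ∅ := by
    simpa [IsStationaryIn, not_nonempty_iff_eq_empty] using hZ
  intro D hD
  obtain ⟨α, hαX, hαD, hαC⟩ := hX _ (hD.inter hC)
  exact ⟨α, (h hαX).resolve_right fun hαZ => hZC.subset ⟨hαZ, hαC⟩, hαD⟩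

theorem Ordinal.exists_isOpen_inter_eq_singleton {s : Set Ordinal} {α : Ordinal} (hα : α ∈ s)
    (hgap : α ≠ 0 → ∃ β < α, Disjoint (Ioo β α) s) : ∃ V, IsOpen V ∧ V ∩ s = {α} := by
  rcases eq_or_ne α 0 with rfl | hα0
  · refine ⟨Iio 1, isOpen_Iio, ?_⟩
    ext γ
    simp only [mem_inter_iff, mem_Iio, Order.lt_one_iff, mem_singleton_iff]
    exact ⟨And.left, fun h => ⟨h, h ▸ hα⟩⟩
  obtain ⟨β, hβα, hdisj⟩ := hgap hα0
  refine ⟨Ioo β (succ α), isOpen_Ioo, ?_⟩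
  rw [Ioo_succ_right]
  ext γ
  refine ⟨fun ⟨⟨hβγ, hγα⟩, hγ⟩ => ?_, ?_⟩
  · by_contra hne
    exact disjoint_left.1 hdisj ⟨hβγ, lt_of_le_of_ne hγα hne⟩ hγ
  · rintro rfl
    exact ⟨⟨hβα, le_rfl⟩, hα⟩

theorem not_isStationaryIn_of_disjoint_Ioo {s : Set Ordinal.{0}} (hs : s ⊆ Iio (ord ℵ₁))
    (hgap : ∀ α ∈ s, α ≠ 0 → ∃ β < α, Disjoint (Ioo β α) s) : ¬ IsStationaryIn s (ord ℵ₁) := by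
  let C := {α | α ≠ 0 ∧ α < ord ℵ₁ ∧ ∀ δ < α, (∃ γ ∈ s, δ < γ ∧ γ < α) ∨ s ⊆ Iic δ}
  have hclosed : IsClosedIn C (ord ℵ₁) := by
    intro α hα hα0 hcof
    refine ⟨hα0, hα, fun δ hδ => ?_⟩
    obtain ⟨γ, ⟨-, -, hγ⟩, hδγ, hγα⟩ := hcof δ hδ
    exact (hγ δ hδγ).imp_left fun ⟨c, hc, h1, h2⟩ => ⟨c, hc, h1, h2.trans hγα⟩
  have hunbdd : ∀ α < ord ℵ₁, ∃ β ∈ C, α < β ∧ β < ord ℵ₁ := by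
    intro α hα
    obtain ⟨β, hαβ, hβ, hβclosed⟩ := exists_closure_point_rel
      (fun δ ε => (∃ γ ∈ s, δ < γ ∧ γ ≤ ε) ∨ s ⊆ Iic δ) (fun δ hδ => by
        by_cases h : ∃ γ ∈ s, δ < γ
        · obtain ⟨γ, hγ, hδγ⟩ := h
          exact ⟨γ, hs hγ, .inl ⟨γ, hγ, hδγ, le_rfl⟩⟩
        · push Not at h
          exact ⟨δ, hδ, .inr h⟩) hα
    refine ⟨β, ⟨(zero_le.trans_lt hαβ).ne', hβ, fun δ hδ => ?_⟩, hαβ, hβ⟩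
    obtain ⟨ε, hεβ, h⟩ := hβclosed δ hδ
    exact h.imp_left fun ⟨γ, hγ, h1, h2⟩ => ⟨γ, hγ, h1, h2.trans_lt hεβ⟩
  intro hstat
  obtain ⟨α, hαs, hα0, -, hα⟩ := hstat C ⟨hclosed, hunbdd⟩
  obtain ⟨β, hβα, hdisj⟩ := hgap α hαs hα0
  rcases hα β hβα with ⟨γ, hγs, hβγ, hγα⟩ | hsub
  · exact disjoint_left.1 hdisj ⟨hβγ, hγα⟩ hγs
  · exact (hsub hαs).not_gt hβα

namespace TreeOrder

variable {T : Type} (S : TreeOrder T)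

theorem height_eq_typein {x : T} (y : {y : T // S.lt y x}) :
    S.height y.1 = @Ordinal.typein _ (fun a b : {y : T // S.lt y x} => S.lt a.1 b.1)
      (S.wellOrdered x) y := by
  have := S.wellOrdered x
  have := S.wellOrdered y.1
  rw [← Ordinal.type_subrel, height, Ordinal.type_eq]
  exact ⟨⟨⟨fun w => ⟨⟨w.1, S.trans w.2 y.2⟩, w.2⟩, fun b => ⟨b.1.1, b.2⟩,
    fun _ => rfl, fun _ => rfl⟩, Iff.rfl⟩⟩

variable {S}

theorem height_lt_height {y x : T} (h : S.lt y x) : S.height y < S.height x := by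
  have := S.wellOrdered x
  rw [S.height_eq_typein ⟨y, h⟩]
  exact Ordinal.typein_lt_type _ _

theorem exists_lt_height_eq {x : T} {γ : Ordinal} (h : γ < S.height x) :
    ∃ y, S.lt y x ∧ S.height y = γ := by
  have := S.wellOrdered x
  obtain ⟨y, hy⟩ := Ordinal.typein_surj _ h
  exact ⟨y.1, y.2, (S.height_eq_typein y).trans hy⟩

theorem lt_of_height_lt {y z x : T} (hy : S.lt y x) (hz : S.lt z x)
    (h : S.height y < S.height z) : S.lt y z := by
  have := S.wellOrdered x
  rcases trichotomous_of (fun a b : {y : T // S.lt y x} => S.lt a.1 b.1) ⟨y, hy⟩ ⟨z, hz⟩ with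
    hyz | hyz | hzy
  · exact hyz
  · cases congrArg Subtype.val hyz
    exact absurd h (lt_irrefl _)
  · exact absurd (height_lt_height hzy) h.not_gt

theorem height_lt_of_level_eq_empty {κ : Ordinal} (hκ : S.level κ = ∅) (x : T) :
    S.height x < κ := by
  by_contra! h
  obtain ⟨y, hy⟩ : ∃ y, S.height y = κ :=
    h.eq_or_lt.elim (fun h => ⟨x, h.symm⟩) fun h => (exists_lt_height_eq h).imp fun _ => And.right
  exact hκ.subset (show y ∈ S.level κ from hy)

theorem TreeOpen.exists_tail_subset {U : Set T} (hU : S.TreeOpen U) {x : T} (hx : x ∈ U)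
    (hlim : IsSuccLimit (S.height x)) :
    ∃ β < S.height x, ∀ y, S.lt y x → β < S.height y → y ∈ U := by
  obtain ⟨p, hpx, hp⟩ := hU x hx hlim
  exact ⟨S.height p, height_lt_height hpx,
    fun y hyx hpy => hp y (lt_of_height_lt hpx hyx hpy) hyx⟩

def coveredLevels (S : TreeOrder T) (U A : Set T) : Set Ordinal :=
  {α | α < ord ℵ₁ ∧ (U ∩ S.level α).Nonempty ∧ U ∩ S.level α ⊆ A}

theorem exists_disjoint_Ioo_coveredLevels {U A : Set T} (hA : S.TDiscrete A)
    (hU : S.TreeOpen U) {α : Ordinal} (hα : α ∈ S.coveredLevels U A) (hα0 : α ≠ 0) :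
    ∃ β < α, Disjoint (Ioo β α) (S.coveredLevels U A) := by
  rcases Ordinal.zero_or_succ_or_isSuccLimit α with rfl | ⟨β, rfl⟩ | hlim
  · exact absurd rfl hα0
  · exact ⟨β, lt_succ β, by rw [Ioo_succ_right, Ioc_self]; exact empty_disjoint _⟩
  obtain ⟨-, ⟨x, hxU, hx⟩, hUA⟩ := hα
  have hx : S.height x = α := hx
  obtain ⟨W, hW, hxW, hWA⟩ := hA x (hUA ⟨hxU, hx⟩)
  obtain ⟨β₁, hβ₁, hU'⟩ := hU.exists_tail_subset hxU (hx ▸ hlim)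
  obtain ⟨β₂, hβ₂, hW'⟩ := hW.exists_tail_subset hxW (hx ▸ hlim)
  refine ⟨max β₁ β₂, hx ▸ max_lt hβ₁ hβ₂, disjoint_left.2 ?_⟩
  rintro γ ⟨hβγ, hγα⟩ ⟨-, -, hγA⟩
  obtain ⟨y, hyx, rfl⟩ := exists_lt_height_eq (hx ▸ hγα)
  rw [max_lt_iff] at hβγ
  have hy : y ∈ W ∩ A := ⟨hW' y hyx hβγ.2, hγA ⟨hU' y hyx hβγ.1, rfl⟩⟩
  rw [hWA] at hy
  exact S.irrefl x (hy ▸ hyx)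

theorem height_image_subset_union (hS : S.level (ord ℵ₁) = ∅) (U A : Set T) :
    S.height '' U ⊆ S.height '' (U \ A) ∪ S.coveredLevels U A := by
  rintro _ ⟨x, hxU, rfl⟩
  by_cases h : U ∩ S.level (S.height x) ⊆ A
  · exact .inr ⟨height_lt_of_level_eq_empty hS x, ⟨x, hxU, rfl⟩, h⟩
  · obtain ⟨y, ⟨hyU, hy⟩, hyA⟩ := not_subset.1 h
    exact .inl ⟨y, ⟨hyU, hyA⟩, hy⟩

end TreeOrder

/-- If `A ⊆ T` is discrete in the tree topology and `U` is a stationary open set, then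
`S₀ = {α < ω₁ : U ∩ L_α ≠ ∅ ∧ U ∩ L_α ⊆ A}` is discrete in the ordinal (order) topology
(hence non-stationary), and consequently `U \ A` is stationary. -/
theorem stationary_minus_discrete {T : Type} (S : TreeOrder T) (hT : S.IsOmega1Tree)
    (A : Set T) (hA : S.TDiscrete A)
    (U : Set T) (hUopen : S.TreeOpen U) (hUstat : S.TStationary U) :
    (∀ α ∈ {α : Ordinal | α < (Cardinal.aleph 1).ord ∧ (U ∩ S.level α).Nonempty ∧
        U ∩ S.level α ⊆ A},
      ∃ V : Set Ordinal, IsOpen V ∧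
        V ∩ {α : Ordinal | α < (Cardinal.aleph 1).ord ∧ (U ∩ S.level α).Nonempty ∧
          U ∩ S.level α ⊆ A} = {α}) ∧
    ¬ IsStationaryIn {α : Ordinal | α < (Cardinal.aleph 1).ord ∧ (U ∩ S.level α).Nonempty ∧
        U ∩ S.level α ⊆ A} (Cardinal.aleph 1).ord ∧
    S.TStationary (U \ A) := by
  have hgap : ∀ α ∈ S.coveredLevels U A, α ≠ 0 → _ := fun α hα =>
    TreeOrder.exists_disjoint_Ioo_coveredLevels hA hUopen hα
  have hnonstat := not_isStationaryIn_of_disjoint_Ioo (fun α hα => hα.1) hgap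
  exact ⟨fun α hα => Ordinal.exists_isOpen_inter_eq_singleton hα (hgap α hα), hnonstat,
    IsStationaryIn.of_subset_union hUstat hnonstat (S.height_image_subset_union hT.2.2 U A)⟩
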